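/- For all real numbers p, q, r, s, the system q = s, 3p² + 4q − q² = 3r² + 4s − s², p² + q² = 1, r² + s² = 1, together with (p,q) ≠ (r,s), holds if and only if r = −p, s = q, p² + q² = 1 and p ≠ 0. In particular, the system has infinitely many solutions (p,q,r,s). -/
import Mathlib


/-- The closing-equation system for `X = (1,0)`, `Y = (4 - 2y, -6x)`. -/
def closingSys7 (p q r s : ℝ) : Prop :=
  q = s ∧ 3 * p ^ 2 + 4 * q - q ^ 2 = 3 * r ^ 2 + 4 * s - s ^ 2 ∧
    p ^ 2 + q ^ 2 = 1 ∧ r ^ 2 + s ^ 2 = 1 ∧ (p, q) ≠ (r, s)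

lemma closingSys7_iff (p q r s : ℝ) :
    closingSys7 p q r s ↔ (r = -p ∧ s = q ∧ p ^ 2 + q ^ 2 = 1 ∧ p ≠ 0) := by
  constructor
  · rintro ⟨hqs, _, h1, h2, hne⟩
    subst hqs
    have hpr : (r - p) * (r + p) = 0 := by nlinarith
    rcases mul_eq_zero.mp hpr with h | h
    · exact absurd (by have : r = p := by linarith
                       simp [this]) hne
    · refine ⟨by linarith, rfl, h1, ?_⟩
      intro hp0
      apply hne
      have : r = 0 := by nlinarith
      simp [hp0, this]
  · rintro ⟨hr, hs, h1, hp⟩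
    subst hr; subst hs
    refine ⟨rfl, by ring, h1, by linarith, ?_⟩
    intro h
    have : p = -p := ((Prod.mk.injEq ..).mp h).1
    apply hp; linarith

/-- The system holds iff `r = -p`, `s = q`, `p² + q² = 1` and `p ≠ 0`; in particular it has
infinitely many solutions. -/
theorem closingSys7_iff_and_infinite :
    (∀ p q r s : ℝ,
      closingSys7 p q r s ↔ (r = -p ∧ s = q ∧ p ^ 2 + q ^ 2 = 1 ∧ p ≠ 0)) ∧
    {x : ℝ × ℝ × ℝ × ℝ | closingSys7 x.1 x.2.1 x.2.2.1 x.2.2.2}.Infinite := by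
  refine ⟨closingSys7_iff, ?_⟩
  have hmt : Set.MapsTo (fun p : ℝ => ((p, Real.sqrt (1 - p ^ 2), -p, Real.sqrt (1 - p ^ 2)) : ℝ × ℝ × ℝ × ℝ))
      (Set.Ioo 0 1) {x : ℝ × ℝ × ℝ × ℝ | closingSys7 x.1 x.2.1 x.2.2.1 x.2.2.2} := by
    intro p hp
    have h1 : (0:ℝ) ≤ 1 - p ^ 2 := by nlinarith [hp.1, hp.2]
    show closingSys7 p (Real.sqrt (1 - p ^ 2)) (-p) (Real.sqrt (1 - p ^ 2))
    rw [closingSys7_iff]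
    refine ⟨rfl, rfl, ?_, hp.1.ne'⟩
    rw [Real.sq_sqrt h1]; ring
  have hinj : Set.InjOn (fun p : ℝ => ((p, Real.sqrt (1 - p ^ 2), -p, Real.sqrt (1 - p ^ 2)) : ℝ × ℝ × ℝ × ℝ)) (Set.Ioo 0 1) := by
    intro a _ b _ h
    exact ((Prod.mk.injEq ..).mp h).1
  have hIoo : (Set.Ioo (0:ℝ) 1).Infinite := Set.Ioo_infinite (by norm_num)
  exact ((hIoo.image hinj).mono (Set.image_subset_iff.mpr hmt))
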